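/- For any ICGS I, initial path ρ, agent a, and strategy σ: if σ is uniform for a in the strong sense (σ(ρ') = σ(ρ'') for ALL pairs of initial paths with ρ' ∼_a ρ''), then σ is weakly uniform for a in ρ; moreover, if σ is weakly uniform for a in ρ, then there exists a strategy σ' that is uniform in the strong sense, agrees with σ on all finite prefixes of the outcome tree of [a↦σ] from ρ, and satisfies out(ρ, [a↦σ']) = out(ρ, [a↦σ]). -/
import Mathlib


/-- A concurrent game structure: transition function, initial state, valuation. -/
structure CGS (S Ag Act AP : Type) where
  δ : S → (Ag → Act) → S
  init : S
  val : S → AP → Prop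

variable {S Ag Act AP Var : Type}

/-- An initial (finite) path: a start state together with the list of decisions taken. -/
abbrev FPath (S Ag Act : Type) := S × List (Ag → Act)

/-- Last state of an initial path. -/
def CGS.lastState (G : CGS S Ag Act AP) (ρ : FPath S Ag Act) : S :=
  ρ.2.foldl G.δ ρ.1

/-- A strategy assigns an action to every initial path. -/
abbrev Strat (S Ag Act : Type) := FPath S Ag Act → Act

/-- Concatenation of initial paths (meaningful when `G.lastState ρ = ρ'.1`,
i.e. they are glued at the shared state). -/
def FPath.concat (ρ ρ' : FPath S Ag Act) : FPath S Ag Act := (ρ.1, ρ.2 ++ ρ'.2)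

/-- The finite prefix with `n` decisions of the play from `q` whose decision stream is `d`. -/
def prefixPath (q : S) (d : ℕ → Ag → Act) (n : ℕ) : FPath S Ag Act :=
  (q, List.ofFn fun i : Fin n => d i)

/-- The state reached after `i` steps of the play from `q` with decision stream `d`. -/
def stateAt (G : CGS S Ag Act AP) (q : S) (d : ℕ → Ag → Act) (i : ℕ) : S :=
  G.lastState (prefixPath q d i)

/-- An assignment: a partial map from agents and variables to strategies. -/
abbrev Assign (S Ag Act Var : Type) := Ag ⊕ Var → Option (Strat S Ag Act)

/-- The outcome of an assignment from a state: the set of plays (identified with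
their decision streams) compatible with all strategies assigned to agents. -/
def outcome (G : CGS S Ag Act AP) (q : S) (χ : Assign S Ag Act Var) :
    Set (ℕ → Ag → Act) :=
  {d | ∀ (k : ℕ) (a : Ag) (σ : Strat S Ag Act),
      χ (Sum.inl a) = some σ → d k a = σ (prefixPath q d k)}

/-- The `ρ`-translation of a strategy. -/
def transStrat [DecidableEq S] (G : CGS S Ag Act AP) (ρ : FPath S Ag Act)
    (σ : Strat S Ag Act) : Strat S Ag Act :=
  fun ρ' => if ρ'.1 = G.lastState ρ then σ (ρ.concat ρ') else σ ρ'

/-- The `ρ`-translation of an assignment. -/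
def transAssign [DecidableEq S] (G : CGS S Ag Act AP) (ρ : FPath S Ag Act)
    (χ : Assign S Ag Act Var) : Assign S Ag Act Var :=
  fun l => (χ l).map (transStrat G ρ)

/-- An imperfect information CGS: a CGS with an indistinguishability
equivalence relation on initial paths for each agent. -/
structure ICGS (S Ag Act AP : Type) extends CGS S Ag Act AP where
  rel : Ag → FPath S Ag Act → FPath S Ag Act → Prop
  rel_equiv : ∀ a, Equivalence (rel a)

/-- The initial path obtained by extending `ρ` with the first `i` decisions of
the stream `d`. -/
def extFPath (ρ : FPath S Ag Act) (d : ℕ → Ag → Act) (i : ℕ) : FPath S Ag Act :=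
  (ρ.1, ρ.2 ++ List.ofFn fun t : Fin i => d t)

/-- Outcome of an assignment from an initial path: plays extending `ρ` (given
by their decision streams) in which each bound agent follows its strategy,
evaluated on the full history. -/
def outcomeFrom (χ : Assign S Ag Act Var) (ρ : FPath S Ag Act) :
    Set (ℕ → Ag → Act) :=
  {d | ∀ (k : ℕ) (a : Ag) (σ : Strat S Ag Act),
      χ (Sum.inl a) = some σ → d k a = σ (extFPath ρ d k)}

mutual
/-- State formulas of Epistemic Strategy Logic (ESL). `act a c` is the action
proposition `p^a_c` ("agent `a` just played action `c`"), and `know A` is the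
distributed knowledge operator `D_A`. -/
inductive ESLForm (AP Ag Act Var : Type) : Type 1 where
  | fls  : ESLForm AP Ag Act Var
  | atom : AP → ESLForm AP Ag Act Var
  | act  : Ag → Act → ESLForm AP Ag Act Var
  | neg  : ESLForm AP Ag Act Var → ESLForm AP Ag Act Var
  | or   : ESLForm AP Ag Act Var → ESLForm AP Ag Act Var → ESLForm AP Ag Act Var
  | exi  : Var → ESLForm AP Ag Act Var → ESLForm AP Ag Act Var
  | bind : Ag → Var → ESLForm AP Ag Act Var → ESLForm AP Ag Act Var
  | unbind : Ag → ESLForm AP Ag Act Var → ESLForm AP Ag Act Var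
  | pathE : ESLPath AP Ag Act Var → ESLForm AP Ag Act Var
  | know : Set Ag → ESLForm AP Ag Act Var → ESLForm AP Ag Act Var
/-- Path formulas of ESL. -/
inductive ESLPath (AP Ag Act Var : Type) : Type 1 where
  | state : ESLForm AP Ag Act Var → ESLPath AP Ag Act Var
  | neg   : ESLPath AP Ag Act Var → ESLPath AP Ag Act Var
  | or    : ESLPath AP Ag Act Var → ESLPath AP Ag Act Var → ESLPath AP Ag Act Var
  | next  : ESLPath AP Ag Act Var → ESLPath AP Ag Act Var
  | untl  : ESLPath AP Ag Act Var → ESLPath AP Ag Act Var → ESLPath AP Ag Act Var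
end

mutual
/-- Semantics of ESL state formulas, at an initial path under an assignment. -/
def ESLsat [DecidableEq Ag] [DecidableEq Var] (I : ICGS S Ag Act AP)
    (χ : Assign S Ag Act Var) (ρ : FPath S Ag Act) : ESLForm AP Ag Act Var → Prop
  | .fls => False
  | .atom p => I.val (I.toCGS.lastState ρ) p
  | .act a c => ∃ dec, ρ.2.getLast? = some dec ∧ dec a = c
  | .neg φ => ¬ ESLsat I χ ρ φ
  | .or φ φ' => ESLsat I χ ρ φ ∨ ESLsat I χ ρ φ'
  | .exi x φ =>
      ∃ σ : Strat S Ag Act, ESLsat I (Function.update χ (Sum.inr x) (some σ)) ρ φ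
  | .bind a x φ => ESLsat I (Function.update χ (Sum.inl a) (χ (Sum.inr x))) ρ φ
  | .unbind a φ => ESLsat I (Function.update χ (Sum.inl a) none) ρ φ
  | .pathE ψ => ∃ d ∈ outcomeFrom χ ρ, ESLsatP I χ ρ d 0 ψ
  | .know A φ => ∀ ρ' : FPath S Ag Act, (∀ a ∈ A, I.rel a ρ ρ') → ESLsat I χ ρ' φ
/-- Semantics of ESL path formulas, on the play extending `ρ` with decision
stream `d`, at position `i` (relative to the end of `ρ`). -/
def ESLsatP [DecidableEq Ag] [DecidableEq Var] (I : ICGS S Ag Act AP)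
    (χ : Assign S Ag Act Var) (ρ : FPath S Ag Act) (d : ℕ → Ag → Act) (i : ℕ) :
    ESLPath AP Ag Act Var → Prop
  | .state φ => ESLsat I χ (extFPath ρ d i) φ
  | .neg ψ => ¬ ESLsatP I χ ρ d i ψ
  | .or ψ ψ' => ESLsatP I χ ρ d i ψ ∨ ESLsatP I χ ρ d i ψ'
  | .next ψ => ESLsatP I χ ρ d (i + 1) ψ
  | .untl ψ ψ' => ∃ j, i ≤ j ∧ ESLsatP I χ ρ d j ψ' ∧
      ∀ k, i ≤ k → k < j → ESLsatP I χ ρ d k ψ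
end

/-- `A X φ`, i.e. `¬ E X ¬φ`. -/
def AXf (φ : ESLForm AP Ag Act Var) : ESLForm AP Ag Act Var :=
  .neg (.pathE (.next (.state (.neg φ))))

/-- `A G φ`, i.e. `¬ E (⊤ U ¬φ)`. -/
def AGf (φ : ESLForm AP Ag Act Var) : ESLForm AP Ag Act Var :=
  .neg (.pathE (.untl (.state (.neg .fls)) (.state (.neg φ))))

/-- Individual knowledge: `K_a φ = D_{\{a\}} φ`. -/
def Kf (a : Ag) (φ : ESLForm AP Ag Act Var) : ESLForm AP Ag Act Var :=
  .know {a} φ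

/-- `AG ⋁_{c ∈ Act} K_{ak} AX p^{aa}_c`. -/
noncomputable def wUnifAux2 [Fintype Act] (ak aa : Ag) : ESLForm AP Ag Act Var :=
  AGf ((Finset.univ.toList.map fun c : Act => Kf ak (AXf (.act aa c))).foldr .or .fls)

/-- The formula `AG ⋁_{c ∈ Act} K_a AX p^a_c` characterizing weak uniformity. -/
noncomputable def wUnifAux [Fintype Act] (a : Ag) : ESLForm AP Ag Act Var :=
  wUnifAux2 a a

/-- The assignment binding only agent `a`, to strategy `σ`. -/
def singleA [DecidableEq Ag] (a : Ag) (σ : Strat S Ag Act) : Assign S Ag Act Var :=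
  fun l => match l with
    | Sum.inl b => if b = a then some σ else none
    | Sum.inr _ => none

/-- `σ` is weakly uniform for `a` in `ρ`: on every finite prefix `ρ'`
(extending `ρ`) of an outcome of `[a ↦ σ]` from `ρ`, and every initial path
`ρ''` indistinguishable from `ρ'` for `a`, `σ(ρ') = σ(ρ'')`. -/
def weaklyUniform [DecidableEq Ag] (I : ICGS S Ag Act AP) (a : Ag)
    (σ : Strat S Ag Act) (ρ : FPath S Ag Act) : Prop :=
  ∀ d ∈ outcomeFrom (singleA a σ : Assign S Ag Act PUnit) ρ,
    ∀ (i : ℕ) (ρ'' : FPath S Ag Act),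
      I.rel a (extFPath ρ d i) ρ'' → σ (extFPath ρ d i) = σ ρ''

/-- `σ` is uniform for `a` in the strong sense: it takes the same action on all
pairs of `∼_a`-indistinguishable initial paths. -/
def stronglyUniform (I : ICGS S Ag Act AP) (a : Ag) (σ : Strat S Ag Act) : Prop :=
  ∀ ρ' ρ'' : FPath S Ag Act, I.rel a ρ' ρ'' → σ ρ' = σ ρ''

/-- Finite prefixes (extending `ρ`) of the outcome tree of `χ` from `ρ`. -/
def outTreePrefixes (χ : Assign S Ag Act PUnit) (ρ : FPath S Ag Act) :
    Set (FPath S Ag Act) :=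
  {ρ' | ∃ d ∈ outcomeFrom χ ρ, ∃ i : ℕ, ρ' = extFPath ρ d i}

lemma mem_outcomeFrom_singleA [DecidableEq Ag] (a : Ag) (σ : Strat S Ag Act)
    (ρ : FPath S Ag Act) (d : ℕ → Ag → Act) :
    d ∈ outcomeFrom (singleA a σ : Assign S Ag Act PUnit) ρ ↔
      ∀ k, d k a = σ (extFPath ρ d k) := by
  constructor
  · intro h k
    exact h k a σ (by simp [singleA])
  · intro h k b τ hb
    by_cases hba : b = a
    · subst hba
      obtain rfl : σ = τ := by simpa [singleA] using hb
      exact h k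
    · simp [singleA, hba] at hb

/-- Auxiliary: the list of the first `n` decisions of the play that follows `d`
for the first `k` steps and then lets agent `a` follow `σ`. -/
def followL [DecidableEq Ag] (σ : Strat S Ag Act) (ρ : FPath S Ag Act) (a : Ag)
    (d : ℕ → Ag → Act) (k : ℕ) : ℕ → List (Ag → Act)
  | 0 => []
  | n + 1 => followL σ ρ a d k n ++
      [fun b => if n < k then d n b
        else if b = a then σ (ρ.1, ρ.2 ++ followL σ ρ a d k n) else d n b]

lemma prefix_mem_tree [DecidableEq Ag] (I : ICGS S Ag Act AP)
    (ρ : FPath S Ag Act) (a : Ag) (σ : Strat S Ag Act) (d : ℕ → Ag → Act) (k : ℕ)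
    (h : ∀ j < k, d j a = σ (extFPath ρ d j)) :
    extFPath ρ d k ∈ outTreePrefixes (singleA a σ : Assign S Ag Act PUnit) ρ := by
  classical
  set e : ℕ → Ag → Act := fun n b =>
    if n < k then d n b
    else if b = a then σ (ρ.1, ρ.2 ++ followL σ ρ a d k n) else d n b with he
  have hF : ∀ n, followL σ ρ a d k n = List.ofFn (fun i : Fin n => e i) := by
    intro n
    induction n with
    | zero => rfl
    | succ n ih =>
      rw [List.ofFn_succ', List.concat_eq_append]
      simp only [Fin.coe_castSucc, Fin.val_last, ← ih]
      rfl
  have hagree : ∀ j ≤ k, extFPath ρ d j = extFPath ρ e j := by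
    intro j hj
    have hfun : (List.ofFn fun t : Fin j => d ↑t) = List.ofFn fun t : Fin j => e ↑t := by
      congr 1
      funext i b
      show d ↑i b = e ↑i b
      simp only [he]
      rw [if_pos (lt_of_lt_of_le i.isLt hj)]
    simp only [extFPath, hfun]
  have heo : e ∈ outcomeFrom (singleA a σ : Assign S Ag Act PUnit) ρ := by
    rw [mem_outcomeFrom_singleA]
    intro j
    have hext : extFPath ρ e j = (ρ.1, ρ.2 ++ followL σ ρ a d k j) := by
      rw [hF]; rfl
    by_cases hjk : j < k
    · have h1 : e j a = d j a := by simp [he, hjk]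
      rw [h1, h j hjk, hagree j (le_of_lt hjk)]
    · have h1 : e j a = σ (ρ.1, ρ.2 ++ followL σ ρ a d k j) := by
        simp [he, hjk]
      rw [h1, hext]
  exact ⟨e, heo, k, hagree k le_rfl⟩

/-- strong uniformity implies weak uniformity in any `ρ`; and a
strategy weakly uniform for `a` in `ρ` can be turned into a strongly uniform
one agreeing with it on the outcome tree from `ρ` and with the same outcomes
from `ρ`. -/
theorem statement_19 [DecidableEq Ag] [Nonempty Act]
    (I : ICGS S Ag Act AP) (ρ : FPath S Ag Act) (a : Ag) (σ : Strat S Ag Act) :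
    (stronglyUniform I a σ → weaklyUniform I a σ ρ) ∧
      (weaklyUniform I a σ ρ →
        ∃ σ' : Strat S Ag Act, stronglyUniform I a σ' ∧
          (∀ ρ' ∈ outTreePrefixes (singleA a σ : Assign S Ag Act PUnit) ρ,
            σ' ρ' = σ ρ') ∧
          outcomeFrom (singleA a σ' : Assign S Ag Act PUnit) ρ =
            outcomeFrom (singleA a σ : Assign S Ag Act PUnit) ρ) := by
  classical
  constructor
  · intro hs d _ i ρ'' hrel
    exact hs _ _ hrel
  · intro hw
    set T := outTreePrefixes (singleA a σ : Assign S Ag Act PUnit) ρ with hT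
    -- on tree prefixes, σ is constant on ∼ₐ-classes
    have htree : ∀ ρt ∈ T, ∀ ρ'', I.rel a ρt ρ'' → σ ρt = σ ρ'' := by
      rintro ρt ⟨d, hd, i, rfl⟩ ρ'' hrel
      exact hw d hd i ρ'' hrel
    set σ' : Strat S Ag Act := fun ρ' =>
      if h : ∃ ρt ∈ T, I.rel a ρt ρ' then σ h.choose
      else Classical.arbitrary Act with hσ'
    have hrefl := (I.rel_equiv a).refl
    have hsymm := fun {x y} => (I.rel_equiv a).symm (x := x) (y := y)
    have htrans := fun {x y z} => (I.rel_equiv a).trans (x := x) (y := y) (z := z)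
    -- the chosen witness
    have hch : ∀ (ρ' : FPath S Ag Act) (h : ∃ ρt ∈ T, I.rel a ρt ρ'),
        h.choose ∈ T ∧ I.rel a h.choose ρ' := fun _ h => h.choose_spec
    have hagree : ∀ ρ' ∈ T, σ' ρ' = σ ρ' := by
      intro ρ' hρ'
      have h : ∃ ρt ∈ T, I.rel a ρt ρ' := ⟨ρ', hρ', hrefl ρ'⟩
      simp only [hσ', dif_pos h]
      exact htree _ (hch ρ' h).1 _ (hch ρ' h).2
    refine ⟨σ', ?_, hagree, ?_⟩
    · intro ρ1 ρ2 hrel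
      by_cases h1 : ∃ ρt ∈ T, I.rel a ρt ρ1
      · have h2 : ∃ ρt ∈ T, I.rel a ρt ρ2 := by
          obtain ⟨ρt, ht, hr⟩ := h1
          exact ⟨ρt, ht, htrans hr hrel⟩
        simp only [hσ', dif_pos h1, dif_pos h2]
        exact htree _ (hch ρ1 h1).1 _
          (htrans (hch ρ1 h1).2 (htrans hrel (hsymm (hch ρ2 h2).2)))
      · have h2 : ¬ ∃ ρt ∈ T, I.rel a ρt ρ2 := by
          rintro ⟨ρt, ht, hr⟩
          exact h1 ⟨ρt, ht, htrans hr (hsymm hrel)⟩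
        simp only [hσ', dif_neg h1, dif_neg h2]
    · ext d
      simp only [Set.mem_setOf_eq, mem_outcomeFrom_singleA]
      constructor
      · intro hd
        -- strong induction: every prefix of d is in the tree
        intro k
        induction k using Nat.strong_induction_on with
        | _ k ih =>
          have hmem : extFPath ρ d k ∈ T :=
            prefix_mem_tree I ρ a σ d k (fun j hj => ih j hj)
          rw [← hagree _ hmem]
          exact hd k
      · intro hd k
        have hmem : extFPath ρ d k ∈ T :=
          prefix_mem_tree I ρ a σ d k (fun j _ => hd j)
        rw [hagree _ hmem]
        exact hd k
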